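/- Let φ(α₁,…,α_r) be a quantifier-free first-order formula over (ℂ,0,1,+,−,×,=) in which all polynomials have degree less than D and integer coefficients of absolute value strictly less than C. If φ(ᾱ) holds for every tuple ᾱ ∈ ℂ^r of numbers algebraically independent over ℚ, then φ(β₁,…,β_r) holds for any integer sequence with β₁ ≥ C and β_{j+1} ≥ C·D^j·β_j^D for 1 ≤ j ≤ r−1. -/

import Mathlib

/-!
At an algebraically independent tuple a polynomial `p i` vanishes exactly when it is the zero
polynomial, so it suffices to show that a nonzero integer polynomial with exponents `< D` and
coefficients of absolute value `< C` does not vanish at `β`. Substituting `β₀` for the first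
variable leaves a polynomial in the other variables whose coefficients are integers
`∑ₖ cₖ β₀ᵏ` with `|cₖ| < C ≤ β₀`: read in base `β₀`, such a number vanishes only if all `cₖ` do,
and its absolute value is below `C D β₀^(D-1)`. With this new coefficient bound the remaining
variables satisfy the same kind of growth condition, and induction on the number of variables
applies.
-/

open MvPolynomial Finset

theorem eq_zero_of_sum_mul_pow_eq_zero {y : ℤ} {c : ℕ → ℤ} (hc : ∀ k, |c k| < y) (n : ℕ)
    (h : ∑ k ∈ range n, c k * y ^ k = 0) : ∀ k < n, c k = 0 := by
  induction n generalizing c with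
  | zero => simp
  | succ n ih =>
    have hsplit : ∑ k ∈ range (n + 1), c k * y ^ k =
        y * ∑ k ∈ range n, c (k + 1) * y ^ k + c 0 := by
      rw [sum_range_succ', mul_sum]
      simp only [pow_succ, pow_zero, mul_one]
      congr 1
      exact sum_congr rfl fun k _ => by ring
    rw [hsplit] at h
    have hc0 : c 0 = 0 :=
      Int.eq_zero_of_abs_lt_dvd ⟨-∑ k ∈ range n, c (k + 1) * y ^ k, by linarith⟩ (hc 0)
    have hy : y ≠ 0 := ((abs_nonneg _).trans_lt (hc 0)).ne'
    rw [hc0, add_zero, mul_eq_zero, or_iff_right hy] at h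
    intro k hk
    cases k with
    | zero => exact hc0
    | succ k => exact ih (fun k => hc (k + 1)) h k (by omega)

theorem abs_sum_mul_pow_lt {c : ℕ → ℤ} {C y : ℤ} {N : ℕ} (hN : 0 < N) (hc : ∀ k, |c k| < C)
    (hy : 1 ≤ y) : |∑ k ∈ range N, c k * y ^ k| < C * N * y ^ (N - 1) := by
  have hterm : ∀ k ∈ range N, |c k * y ^ k| < C * y ^ (N - 1) := fun k hk => by
    have hk : k ≤ N - 1 := by have := mem_range.1 hk; omega
    rw [abs_mul, abs_pow, abs_of_pos (by omega : 0 < y)]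
    calc |c k| * y ^ k ≤ |c k| * y ^ (N - 1) := by gcongr
      _ < C * y ^ (N - 1) := by gcongr; exact hc k
  calc |∑ k ∈ range N, c k * y ^ k| ≤ ∑ k ∈ range N, |c k * y ^ k| := abs_sum_le_sum_abs _ _
    _ < ∑ _k ∈ range N, C * y ^ (N - 1) :=
      sum_lt_sum_of_nonempty (nonempty_range_iff.2 hN.ne') hterm
    _ = C * N * y ^ (N - 1) := by rw [sum_const, card_range, nsmul_eq_mul]; ring

section PartialEval

variable {R : Type*} [CommSemiring R] {n : ℕ}

theorem eval_eval_C_finSuccEquiv (f : MvPolynomial (Fin (n + 1)) R) (y : R) (s : Fin n → R) :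
    eval s ((finSuccEquiv R n f).eval (C y)) = eval (Fin.cons y s) f := by
  conv_rhs => rw [eval_eq_eval_mv_eval', Polynomial.eval_map, ← eval_C (f := s) y]
  rw [Polynomial.eval₂_at_apply]

theorem coeff_eval_C_finSuccEquiv {N : ℕ} {f : MvPolynomial (Fin (n + 1)) R} (hN : f.degreeOf 0 < N)
    (y : R) (m : Fin n →₀ ℕ) :
    ((finSuccEquiv R n f).eval (C y)).coeff m = ∑ k ∈ range N, f.coeff (m.cons k) * y ^ k := by
  rw [Polynomial.eval_eq_sum_range' (by rwa [natDegree_finSuccEquiv]), coeff_sum]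
  refine sum_congr rfl fun k _ => ?_
  rw [← C_pow, mul_comm, coeff_C_mul, finSuccEquiv_coeff_coeff, mul_comm]

end PartialEval

-- `C * D ^ j * ∏ i < j, b i ^ (D - 1)` strictly bounds the absolute value at `b 0, …, b (j - 1)`
-- of any integer polynomial in `j` variables with exponents `< D` and coefficients `< C` in
-- absolute value: it has at most `D ^ j` monomials.
def IsFastGrowing (C : ℤ) (D n : ℕ) (b : ℕ → ℤ) : Prop :=
  ∀ j < n, C * D ^ j * ∏ i ∈ range j, b i ^ (D - 1) ≤ b j

theorem IsFastGrowing.tail {C : ℤ} {D n : ℕ} {b : ℕ → ℤ} (h : IsFastGrowing C D (n + 1) b) :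
    IsFastGrowing (C * D * b 0 ^ (D - 1)) D n (fun i => b (i + 1)) := by
  intro j hj
  have hj' := h (j + 1) (by omega)
  rw [prod_range_succ'] at hj'
  convert hj' using 1
  ring

theorem isFastGrowing_of_le_mul_pow {C : ℤ} {D r : ℕ} {b : ℕ → ℤ} (hC : 0 < C) (hD : 1 ≤ D)
    (h0 : 0 < r → C ≤ b 0) (hsucc : ∀ j, j + 1 < r → C * D ^ (j + 1) * b j ^ D ≤ b (j + 1)) :
    IsFastGrowing C D r b := by
  suffices ∀ j < r, 0 ≤ ∏ i ∈ range j, b i ^ (D - 1) ∧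
      C * D ^ j * ∏ i ∈ range j, b i ^ (D - 1) ≤ b j from fun j hj => (this j hj).2
  intro j
  induction j with
  | zero => intro hr; simpa using h0 hr
  | succ j ih =>
    intro hj
    obtain ⟨hP, hPb⟩ := ih (by omega)
    have hCD : 1 ≤ C * (D : ℤ) ^ j :=
      one_le_mul_of_one_le_of_one_le hC (one_le_pow₀ (by exact_mod_cast hD))
    have hle : ∏ i ∈ range j, b i ^ (D - 1) ≤ b j := (le_mul_of_one_le_left hP hCD).trans hPb
    have hbj : 0 ≤ b j := hP.trans hle
    rw [prod_range_succ]
    refine ⟨mul_nonneg hP (pow_nonneg hbj _), ?_⟩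
    calc C * D ^ (j + 1) * ((∏ i ∈ range j, b i ^ (D - 1)) * b j ^ (D - 1))
        ≤ C * D ^ (j + 1) * (b j * b j ^ (D - 1)) := by gcongr
      _ = C * D ^ (j + 1) * b j ^ D := by rw [← pow_succ', Nat.sub_add_cancel hD]
      _ ≤ b (j + 1) := hsucc j hj

theorem eval_ne_zero_of_isFastGrowing {D n : ℕ} {C : ℤ} {b : ℕ → ℤ} {f : MvPolynomial (Fin n) ℤ}
    (hexp : ∀ d ∈ f.support, ∀ i, d i < D) (hcoeff : ∀ d, |f.coeff d| < C)
    (hb : IsFastGrowing C D n b) (hf : f ≠ 0) : eval (fun i : Fin n => b i) f ≠ 0 := by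
  induction n generalizing C b with
  | zero =>
    rw [f.eq_C_of_isEmpty, eval_C]
    intro h
    exact hf (by rw [f.eq_C_of_isEmpty, h, C_0])
  | succ n ih =>
    obtain ⟨d, hd⟩ := support_nonempty.2 hf
    have hD : 0 < D := (Nat.zero_le _).trans_lt (hexp d hd 0)
    have hy : C ≤ b 0 := by simpa using hb 0 (Nat.succ_pos n)
    set g := (finSuccEquiv ℤ n f).eval (MvPolynomial.C (b 0))
    have hg : ∀ m, g.coeff m = ∑ k ∈ range D, f.coeff (m.cons k) * b 0 ^ k :=
      coeff_eval_C_finSuccEquiv ((degreeOf_lt_iff hD).2 fun d hd => hexp d hd 0) _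
    have hcons : (fun i : Fin (n + 1) => b i) = Fin.cons (b 0) (fun i : Fin n => b (i + 1)) := by
      funext i
      cases i using Fin.cases <;> simp
    rw [hcons, ← eval_eval_C_finSuccEquiv]
    refine ih (C := C * D * b 0 ^ (D - 1)) (b := fun i => b (i + 1)) (f := g) ?_ ?_ hb.tail ?_
    · intro m hm i
      obtain ⟨k, -, hk⟩ := exists_ne_zero_of_sum_ne_zero (hg m ▸ mem_support_iff.1 hm)
      simpa using hexp _ (mem_support_iff.2 (left_ne_zero_of_mul hk)) i.succ
    · intro m
      rw [hg]
      have hC : 0 < C := (abs_nonneg _).trans_lt (hcoeff 0)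
      exact abs_sum_mul_pow_lt hD (fun k => hcoeff _) (by omega)
    · intro hg0
      have hsum := hg d.tail
      rw [hg0, coeff_zero, eq_comm] at hsum
      have := eq_zero_of_sum_mul_pow_eq_zero (fun k => (hcoeff _).trans_le hy) D hsum (d 0)
        (hexp d hd 0)
      rw [Finsupp.cons_tail] at this
      exact mem_support_iff.1 hd this

theorem exists_algebraicIndependent_complex (ι : Type*) [Countable ι] :
    ∃ α : ι → ℂ, AlgebraicIndependent ℚ α := by
  obtain ⟨s, hs⟩ := exists_isTranscendenceBasis ℚ ℂ
  have hcard : Cardinal.mk ℂ = Cardinal.mk s :=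
    IsAlgClosed.cardinal_eq_cardinal_transcendence_basis_of_aleph0_lt' _ hs
      Cardinal.mk_le_aleph0 (by rw [Cardinal.mk_complex]; exact Cardinal.aleph0_lt_continuum)
  have : Infinite s := by
    rw [Cardinal.infinite_iff, ← hcard, Cardinal.mk_complex]
    exact Cardinal.aleph0_le_continuum
  obtain ⟨e, he⟩ := Countable.exists_injective_nat ι
  exact ⟨Subtype.val ∘ Infinite.natEmbedding s ∘ e,
    hs.1.comp _ ((Infinite.natEmbedding s).injective.comp he)⟩

theorem AlgebraicIndependent.aeval_int_eq_zero_iff {ι A : Type*} [CommRing A] [Algebra ℚ A]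
    {α : ι → A} (hα : AlgebraicIndependent ℚ α) (q : MvPolynomial ι ℤ) :
    aeval α q = 0 ↔ q = 0 :=
  ⟨(hα.restrictScalars Int.cast_injective).eq_zero_of_aeval_eq_zero q, fun h => h ▸ map_zero _⟩

/-- Lemma 4 (Koiran 1997): a quantifier-free formula (a Boolean combination,
encoded by `φ`, of polynomial equations `p i = 0`) that holds at every
algebraically independent tuple also holds at any sufficiently fast growing
integer sequence. -/
theorem stmt5 (r m : ℕ) (p : Fin m → MvPolynomial (Fin r) ℤ)
    (φ : (Fin m → Prop) → Prop)
    (C : ℤ) (D : ℕ) (hC : 0 < C) (hD : 1 ≤ D)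
    (hdeg : ∀ i, (p i).totalDegree < D)
    (hcoeff : ∀ i mon, |(p i).coeff mon| < C)
    (hφ : ∀ α : Fin r → ℂ, AlgebraicIndependent ℚ α →
      φ (fun i => aeval α (p i) = 0))
    (β : Fin r → ℤ)
    (hβ1 : ∀ h : 0 < r, C ≤ β ⟨0, h⟩)
    (hβ : ∀ j : ℕ, (hj : j + 1 < r) →
      C * (D : ℤ) ^ (j + 1) * (β ⟨j, by omega⟩) ^ D ≤ β ⟨j + 1, hj⟩) :
    φ (fun i => aeval (fun k => ((β k : ℤ) : ℂ)) (p i) = 0) := by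
  obtain ⟨α, hα⟩ := exists_algebraicIndependent_complex (Fin r)
  set b : ℕ → ℤ := fun i => if h : i < r then β ⟨i, h⟩ else 0
  have hβb : (fun i : Fin r => b i) = β := funext fun i => dif_pos i.2
  have hb : IsFastGrowing C D r b := isFastGrowing_of_le_mul_pow hC hD
    (fun h => by simpa [b, h] using hβ1 h)
    (fun j hj => by simpa [b, hj, show j < r by omega] using hβ j hj)
  have hzero : ∀ i, (aeval (fun k => ((β k : ℤ) : ℂ)) (p i) = 0) ↔ aeval α (p i) = 0 := by
    intro i
    rw [hα.aeval_int_eq_zero_iff, show (fun k => ((β k : ℤ) : ℂ)) = algebraMap ℤ ℂ ∘ β from rfl,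
      aeval_algebraMap_eq_zero_iff, aeval_eq_eval, ← hβb]
    refine ⟨fun h => by_contra fun hp => eval_ne_zero_of_isFastGrowing ?_ (hcoeff i) hb hp h,
      fun h => h ▸ map_zero _⟩
    exact fun d hd k =>
      (monomial_le_degreeOf k hd).trans_lt ((degreeOf_le_totalDegree _ k).trans_lt (hdeg i))
  simpa only [hzero] using hφ α hα
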